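/- Let J : ℝ^p → ℝ ∪ {+∞} be proper convex lsc, D : ℝ^n → ℝ^p linear, H convex differentiable on ℝ^n, G : ℝ^n → ℝ^n, and β, α, γ, τ > 0. Suppose (z, y, u, ū) is a fixed point of the prior-stacking scheme z⁺ = z + γDū − γ prox_{(β/γ)J}((1/γ)z + Dū), y⁺ = y + γū − γG((1/γ)y + ū), u⁺ = prox_{τα H}(u − τy⁺ − τD^Tz⁺), ū⁺ = 2u⁺ − u. Then ū = u, z ∈ β∂J(Du), y = −α∇H(u) − D^Tz, and u = G(u − (1/γ)(α∇H(u) + D^Tz)). -/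

import Mathlib

/-!
At a fixed point every update is stationary. The `z`- and `y`-equations say that the prox point
equals `Du` and that `G` fixes `u`; the `u`-update is a prox step of a differentiable function,
whose first-order condition gives `y`. For the subgradient inclusion, minimality of the prox
objective on the segment from `Du` to `v`, together with convexity of `J`, yields a quadratic in
the step `t` that is nonnegative on `(0, 1]`; letting `t → 0` leaves its linear coefficient,
which is the subgradient inequality.
-/

open ContinuousLinearMap
open scoped RealInnerProductSpace

/-- `proxProp lam F b w` expresses `w = prox_{lam·F}(b)` for a real-valued `F`. -/
def proxProp {k : ℕ} (lam : ℝ) (F : EuclideanSpace ℝ (Fin k) → ℝ)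
    (b w : EuclideanSpace ℝ (Fin k)) : Prop :=
  ∀ v, (1/2) * ‖w - b‖^2 + lam * F w ≤ (1/2) * ‖v - b‖^2 + lam * F v

/-- `proxPropE lam F b w` expresses `w = prox_{lam·F}(b)` for an extended-real-valued `F`. -/
def proxPropE {k : ℕ} (lam : ℝ) (F : EuclideanSpace ℝ (Fin k) → EReal)
    (b w : EuclideanSpace ℝ (Fin k)) : Prop :=
  ∀ v, (((1/2) * ‖w - b‖^2 : ℝ) : EReal) + (lam : EReal) * F w ≤
    (((1/2) * ‖v - b‖^2 : ℝ) : EReal) + (lam : EReal) * F v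

open Filter Topology

lemma IsLocalMin.hasGradientAt_eq_zero {E : Type*} [NormedAddCommGroup E]
    [InnerProductSpace ℝ E] [CompleteSpace E] {f : E → ℝ} {a g : E}
    (h : IsLocalMin f a) (hf : HasGradientAt f g a) : g = 0 := by
  rw [hasGradientAt_iff_hasFDerivAt] at hf
  simpa using h.hasFDerivAt_eq_zero hf

lemma hasGradientAt_half_norm_sub_sq {E : Type*} [NormedAddCommGroup E]
    [InnerProductSpace ℝ E] [CompleteSpace E] (b x : E) :
    HasGradientAt (fun v => (1/2 : ℝ) * ‖v - b‖ ^ 2) (x - b) x := by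
  rw [hasGradientAt_iff_hasFDerivAt]
  refine ((((hasFDerivAt_id x).sub_const b).norm_sq).const_mul (1/2 : ℝ)).congr_fderiv ?_
  ext d
  simp

theorem proxProp.sub_eq_smul_of_hasGradientAt {k : ℕ} {lam : ℝ}
    {F : EuclideanSpace ℝ (Fin k) → ℝ} {b w g : EuclideanSpace ℝ (Fin k)}
    (h : proxProp lam F b w) (hF : HasGradientAt F g w) : b - w = lam • g := by
  have hmin : IsLocalMin (fun v => (1/2 : ℝ) * ‖v - b‖ ^ 2 + lam * F v) w :=
    Eventually.of_forall h
  have hgrad : HasGradientAt (fun v => (1/2 : ℝ) * ‖v - b‖ ^ 2 + lam * F v)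
      ((w - b) + lam • g) w := by
    rw [hasGradientAt_iff_hasFDerivAt] at hF ⊢
    rw [map_add, map_smul]
    exact (hasGradientAt_iff_hasFDerivAt.1 (hasGradientAt_half_norm_sub_sq b w)).add
      (hF.const_mul lam)
  linear_combination (norm := module) -hmin.hasGradientAt_eq_zero hgrad

lemma nonneg_of_forall_mul_add_sq_nonneg {A B : ℝ}
    (h : ∀ t : ℝ, 0 < t → t ≤ 1 → 0 ≤ t * A + t ^ 2 * B) : 0 ≤ A := by
  have hlim : Tendsto (fun t : ℝ => A + t * B) (𝓝[>] 0) (𝓝 A) := by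
    have : Tendsto (fun t : ℝ => A + t * B) (𝓝 0) (𝓝 (A + 0 * B)) :=
      tendsto_const_nhds.add (tendsto_id.mul_const B)
    simpa using this.mono_left nhdsWithin_le_nhds
  refine ge_of_tendsto hlim ?_
  filter_upwards [Ioc_mem_nhdsGT one_pos] with t ⟨ht0, ht1⟩
  have := h t ht0 ht1
  exact (mul_nonneg_iff_of_pos_left ht0).1 (by linear_combination this)

section ProxConvex

variable {k : ℕ} {F : EuclideanSpace ℝ (Fin k) → EReal}

theorem proxPropE.mul_add_inner_le
    (hconv : ∀ x y : EuclideanSpace ℝ (Fin k), ∀ a b : ℝ, 0 ≤ a → 0 ≤ b → a + b = 1 →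
      F (a • x + b • y) ≤ (a : EReal) * F x + (b : EReal) * F y)
    {lam a s : ℝ} {b w v : EuclideanSpace ℝ (Fin k)}
    (h : proxPropE lam F b w) (hlam : 0 ≤ lam) (hw : F w = a) (hv : F v = s) :
    lam * a + ⟪b - w, v - w⟫ ≤ lam * s := by
  have hsymm : ⟪b - w, v - w⟫ = -⟪w - b, v - w⟫ := by rw [← inner_neg_left, neg_sub]
  suffices 0 ≤ ⟪w - b, v - w⟫ + lam * (s - a) by rw [hsymm]; linear_combination this
  refine nonneg_of_forall_mul_add_sq_nonneg (B := ‖v - w‖ ^ 2 / 2) fun t ht0 ht1 => ?_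
  have hseg : (1/2) * ‖w - b‖ ^ 2 + lam * a ≤
      (1/2) * ‖(1 - t) • w + t • v - b‖ ^ 2 + lam * ((1 - t) * a + t * s) := by
    have hmin := h ((1 - t) • w + t • v)
    have hF := hconv w v (1 - t) t (by linarith) ht0.le (by ring)
    rw [hw, hv] at hF
    rw [hw] at hmin
    have hlamF : (lam : EReal) * F ((1 - t) • w + t • v) ≤ lam * ((1 - t) * a + t * s : ℝ) :=
      mul_le_mul_of_nonneg_left (hF.trans_eq (by norm_cast)) (by exact_mod_cast hlam)
    exact_mod_cast hmin.trans (add_le_add_right hlamF _)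
  have hnorm : ‖(1 - t) • w + t • v - b‖ ^ 2
      = ‖w - b‖ ^ 2 + 2 * t * ⟪w - b, v - w⟫ + t ^ 2 * ‖v - w‖ ^ 2 := by
    rw [show (1 - t) • w + t • v - b = (w - b) + t • (v - w) by module, norm_add_sq_real,
      real_inner_smul_right, norm_smul, mul_pow, Real.norm_eq_abs, sq_abs]
    ring
  rw [hnorm] at hseg
  linear_combination hseg

theorem proxPropE.smul_sub_mem_smul_subdifferential
    (hconv : ∀ x y : EuclideanSpace ℝ (Fin k), ∀ a b : ℝ, 0 ≤ a → 0 ≤ b → a + b = 1 →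
      F (a • x + b • y) ≤ (a : EReal) * F x + (b : EReal) * F y)
    (hbot : ∀ x, F x ≠ ⊥) {β γ : ℝ} (hβ : 0 < β) (hγ : 0 < γ) {b w : EuclideanSpace ℝ (Fin k)}
    (h : proxPropE (β / γ) F b w) (v : EuclideanSpace ℝ (Fin k)) :
    (β : EReal) * F w + ((⟪γ • (b - w), v - w⟫ : ℝ) : EReal) ≤ (β : EReal) * F v := by
  rcases eq_or_ne (F v) ⊤ with hv | hv
  · rw [hv, EReal.coe_mul_top_of_pos hβ]
    exact le_top
  obtain ⟨s, hs⟩ : ∃ s : ℝ, F v = s := ⟨_, (EReal.coe_toReal hv (hbot v)).symm⟩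
  have hw : F w ≠ ⊤ := by
    intro hw
    have hmin := h v
    rw [hw, hs, EReal.coe_mul_top_of_pos (div_pos hβ hγ),
      EReal.add_top_of_ne_bot (EReal.coe_ne_bot _), top_le_iff, ← EReal.coe_mul,
      ← EReal.coe_add] at hmin
    exact EReal.coe_ne_top _ hmin
  obtain ⟨a, ha⟩ : ∃ a : ℝ, F w = a := ⟨_, (EReal.coe_toReal hw (hbot w)).symm⟩
  have key := h.mul_add_inner_le hconv (div_pos hβ hγ).le ha hs
  rw [ha, hs]
  norm_cast
  rw [real_inner_smul_left]
  have hscale := mul_le_mul_of_nonneg_left key hγ.le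
  field_simp at hscale
  linarith

end ProxConvex

theorem prior_stacking_fixed_point_general {n p : ℕ}
    (J : EuclideanSpace ℝ (Fin p) → EReal)
    (hJbot : ∀ x, J x ≠ ⊥)
    (hJconv : ∀ x y : EuclideanSpace ℝ (Fin p), ∀ a b : ℝ, 0 ≤ a → 0 ≤ b → a + b = 1 →
      J (a • x + b • y) ≤ (a : EReal) * J x + (b : EReal) * J y)
    (D : EuclideanSpace ℝ (Fin n) →L[ℝ] EuclideanSpace ℝ (Fin p))
    (H : EuclideanSpace ℝ (Fin n) → ℝ)
    (H' : EuclideanSpace ℝ (Fin n) → EuclideanSpace ℝ (Fin n))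
    (hH : ∀ x, HasGradientAt H (H' x) x)
    (G : EuclideanSpace ℝ (Fin n) → EuclideanSpace ℝ (Fin n))
    (β α γ τ : ℝ) (hβ : 0 < β) (hγ : 0 < γ) (hτ : 0 < τ)
    (z q : EuclideanSpace ℝ (Fin p)) (y u ubar : EuclideanSpace ℝ (Fin n))
    -- `q` is the prox step in the `z`-update
    (hq : proxPropE (β/γ) J ((1/γ) • z + D ubar) q)
    -- fixed-point equations of the prior-stacking scheme
    (hz : z = z + γ • D ubar - γ • q)
    (hy : y = y + γ • ubar - γ • G ((1/γ) • y + ubar))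
    (hu : proxProp (τ * α) H (u - τ • y - τ • (adjoint D) z) u)
    (hub : ubar = (2 : ℝ) • u - u) :
    ubar = u ∧
    (∀ v, (β : EReal) * J (D u) + ((⟪z, v - D u⟫ : ℝ) : EReal) ≤ (β : EReal) * J v) ∧
    y = -(α • H' u) - (adjoint D) z ∧
    u = G (u - (1/γ) • (α • H' u + (adjoint D) z)) := by
  have hubar : ubar = u := by rw [hub]; module
  rw [hubar] at hq hz hy
  have hqD : q = D u :=
    smul_right_injective _ hγ.ne' (by linear_combination (norm := module) hz)
  have hGfix : G ((1/γ) • y + u) = u :=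
    smul_right_injective _ hγ.ne' (by linear_combination (norm := module) hy)
  have hyD : y = -(α • H' u) - (adjoint D) z :=
    smul_right_injective _ hτ.ne'
      (by linear_combination (norm := module) -hu.sub_eq_smul_of_hasGradientAt (hH u))
  refine ⟨hubar, fun v => ?_, hyD, ?_⟩
  · have hzq : γ • ((1/γ) • z + D u - D u) = z := by
      rw [add_sub_cancel_right, smul_smul, mul_one_div_cancel hγ.ne', one_smul]
    simpa only [hqD, hzq] using hq.smul_sub_mem_smul_subdifferential hJconv hJbot hβ hγ v
  · rwa [show u - (1/γ) • (α • H' u + (adjoint D) z) = (1/γ) • y + u by rw [hyD]; module,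
      eq_comm]

/-- Fixed points of the prior-stacking scheme: `ū = u`, `z ∈ β∂J(Du)`,
`y = −α∇H(u) − Dᵀz`, and `u = G(u − (1/γ)(α∇H(u) + Dᵀz))`. -/
theorem prior_stacking_fixed_point {n p : ℕ}
    (J : EuclideanSpace ℝ (Fin p) → EReal)
    (hJproper : ∃ x, J x ≠ ⊤) (hJbot : ∀ x, J x ≠ ⊥)
    (hJlsc : LowerSemicontinuous J)
    (hJconv : ∀ x y : EuclideanSpace ℝ (Fin p), ∀ a b : ℝ, 0 ≤ a → 0 ≤ b → a + b = 1 →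
      J (a • x + b • y) ≤ (a : EReal) * J x + (b : EReal) * J y)
    (D : EuclideanSpace ℝ (Fin n) →L[ℝ] EuclideanSpace ℝ (Fin p))
    (H : EuclideanSpace ℝ (Fin n) → ℝ)
    (H' : EuclideanSpace ℝ (Fin n) → EuclideanSpace ℝ (Fin n))
    (hHconv : ConvexOn ℝ Set.univ H)
    (hH : ∀ x, HasGradientAt H (H' x) x)
    (G : EuclideanSpace ℝ (Fin n) → EuclideanSpace ℝ (Fin n))
    (β α γ τ : ℝ) (hβ : 0 < β) (hα : 0 < α) (hγ : 0 < γ) (hτ : 0 < τ)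
    (z q : EuclideanSpace ℝ (Fin p)) (y u ubar : EuclideanSpace ℝ (Fin n))
    -- `q` is the prox step in the `z`-update
    (hq : proxPropE (β/γ) J ((1/γ) • z + D ubar) q)
    -- fixed-point equations of the prior-stacking scheme
    (hz : z = z + γ • D ubar - γ • q)
    (hy : y = y + γ • ubar - γ • G ((1/γ) • y + ubar))
    (hu : proxProp (τ * α) H (u - τ • y - τ • (adjoint D) z) u)
    (hub : ubar = (2 : ℝ) • u - u) :
    ubar = u ∧
    (∀ v, (β : EReal) * J (D u) + ((⟪z, v - D u⟫ : ℝ) : EReal) ≤ (β : EReal) * J v) ∧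
    y = -(α • H' u) - (adjoint D) z ∧
    u = G (u - (1/γ) • (α • H' u + (adjoint D) z)) :=
  prior_stacking_fixed_point_general J hJbot hJconv D H H' hH G β α γ τ hβ hγ hτ z q y u ubar hq hz
    hy hu hub
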